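/- For θ > 0 and λ ∈ (0,1), the generalized Poisson distribution sums to one: ∑_{n=0}^∞ θ(θ+λn)^{n-1}/n! · e^{-(θ+λn)} = 1. -/

import Mathlib

/-!
Write `p_n(x) = x (x + n z)^(n-1)` (`abelPoly`); the GPD masses are `e^{-θ} p_n(θ) e^{-nλ} / n!`
with `z = λ`. For small complex `z` the double series `∑_{n,j} p_n(θ)/n! · (-nz)^j/j!` converges
absolutely: summing its rows gives `∑ p_n(θ) e^{-nz}/n!`, while summing its antidiagonals gives
`∑ θ^N/N! = e^θ` by Abel's identity `∑_k C(N,k) p_k(x) (y - kz)^(N-k) = (x + y)^N` at `y = 0`.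
The series is holomorphic in `z` on a star-shaped region containing `(0, 1)`, so the identity
principle extends `∑ p_n(θ) e^{-nz}/n! = e^θ` from a neighbourhood of `0` to `z = λ`.

Abel's identity is proved by induction on `N`: both sides have `y`-derivative `N` times the
previous case, and they agree at `y = -x` because the `N`-th finite difference of a polynomial
of degree `N - 1` vanishes.
-/

open Finset Filter Topology
open scoped Nat

def abelPoly {R : Type*} [CommSemiring R] (x z : R) : ℕ → R
  | 0 => 1
  | n + 1 => x * (x + (n + 1) * z) ^ n

theorem map_abelPoly {R S : Type*} [CommSemiring R] [CommSemiring S] (f : R →+* S) (x z : R)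
    (n : ℕ) : f (abelPoly x z n) = abelPoly (f x) (f z) n := by
  cases n <;> simp [abelPoly]

theorem abelPoly_eq_mul_zpow {K : Type*} [Field K] {x : K} (hx : x ≠ 0) (z : K) (n : ℕ) :
    abelPoly x z n = x * (x + z * n) ^ ((n : ℤ) - 1) := by
  cases n with
  | zero => simp [abelPoly, hx]
  | succ n =>
    rw [abelPoly, Nat.cast_succ (R := ℤ), add_sub_cancel_right, zpow_natCast, mul_comm z]
    push_cast
    ring

theorem abelPoly_mul_add_pow {R : Type*} [CommSemiring R] (x z : R) {k n : ℕ} (hk : k ≤ n + 1) :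
    abelPoly x z k * (x + k * z) ^ (n + 1 - k) = x * (x + k * z) ^ n := by
  cases k with
  | zero => simp [abelPoly, pow_succ']
  | succ k =>
    rw [abelPoly, mul_assoc]
    push_cast
    rw [← pow_add]
    congr 2
    omega

theorem sum_neg_one_pow_mul_choose_mul_add_pow_eq_zero {R : Type*} [CommRing R] {m n : ℕ}
    (h : m < n) (x z : R) :
    ∑ k ∈ range (n + 1), (-1) ^ (n - k) * n.choose k * (x + k * z) ^ m = 0 := by
  open Polynomial in
  have hdeg : ((C x + C z * X) ^ m).natDegree < n := by
    refine lt_of_le_of_lt (natDegree_pow_le_of_le (m := 1) m ?_) (by simpa using h)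
    compute_degree!
  have := congr_fun (Polynomial.fwdDiff_iter_eq_zero_of_degree_lt hdeg) 0
  rw [fwdDiff_iter_eq_sum_shift] at this
  simpa [mul_comm z] using this

section AbelIdentity

variable {𝕜 : Type*} [RCLike 𝕜]

def abelSum (x z : 𝕜) (n : ℕ) (y : 𝕜) : 𝕜 :=
  ∑ k ∈ range (n + 1), n.choose k * abelPoly x z k * (y - k * z) ^ (n - k)

theorem hasDerivAt_abelSum (x z : 𝕜) (n : ℕ) (y : 𝕜) :
    HasDerivAt (abelSum x z (n + 1)) ((n + 1) * abelSum x z n y) y := by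
  have hsum := HasDerivAt.fun_sum (u := range (n + 2)) fun k _ ↦
    (((hasDerivAt_id y).sub_const (k * z)).pow (n + 1 - k)).const_mul
      ((n + 1).choose k * abelPoly x z k)
  refine HasDerivAt.congr_deriv (f := abelSum x z (n + 1)) hsum ?_
  simp only [id, mul_one, abelSum, mul_sum, sum_range_succ _ (n + 1), Nat.sub_self,
    Nat.cast_zero, zero_mul, mul_zero, add_zero]
  refine sum_congr rfl fun k hk ↦ ?_
  have hk : k ≤ n := Nat.lt_succ_iff.mp (mem_range.mp hk)
  have hcoeff := congrArg (Nat.cast : ℕ → 𝕜) (Nat.choose_mul_succ_eq n k)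
  push_cast at hcoeff
  rw [show n + 1 - k - 1 = n - k by omega]
  linear_combination -(abelPoly x z k * (y - k * z) ^ (n - k)) * hcoeff

theorem abelSum_neg (x z : 𝕜) (n : ℕ) : abelSum x z (n + 1) (-x) = 0 :=
  calc abelSum x z (n + 1) (-x)
      = x * ∑ k ∈ range (n + 2), (-1) ^ (n + 1 - k) * (n + 1).choose k * (x + k * z) ^ n := by
        rw [abelSum, mul_sum]
        refine sum_congr rfl fun k hk ↦ ?_
        have hk : k ≤ n + 1 := Nat.lt_succ_iff.mp (mem_range.mp hk)
        rw [show -x - k * z = -1 * (x + k * z) by ring, mul_pow]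
        linear_combination ((n + 1).choose k * (-1) ^ (n + 1 - k) : 𝕜) *
          abelPoly_mul_add_pow x z hk
    _ = 0 := by rw [sum_neg_one_pow_mul_choose_mul_add_pow_eq_zero (by omega), mul_zero]

theorem abelSum_eq_add_pow (x z : 𝕜) (n : ℕ) (y : 𝕜) : abelSum x z n y = (x + y) ^ n := by
  induction n generalizing y with
  | zero => simp [abelSum, abelPoly]
  | succ n ih =>
    have hderiv (y : 𝕜) : HasDerivAt (fun y ↦ abelSum x z (n + 1) y - (x + y) ^ (n + 1)) 0 y := by
      refine ((hasDerivAt_abelSum x z n y).sub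
        ((hasDerivAt_id y).const_add x |>.pow (n + 1))).congr_deriv ?_
      rw [ih, id, Nat.add_sub_cancel]
      push_cast
      ring
    have hconst := is_const_of_deriv_eq_zero (fun y ↦ (hderiv y).differentiableAt)
      (fun y ↦ (hderiv y).deriv) y (-x)
    rwa [abelSum_neg, add_neg_cancel, zero_pow n.succ_ne_zero, sub_zero, sub_eq_zero] at hconst

end AbelIdentity

theorem abelPoly_nonneg {a ρ : ℝ} (ha : 0 ≤ a) (hρ : 0 ≤ ρ) (n : ℕ) : 0 ≤ abelPoly a ρ n := by
  cases n <;> simp only [abelPoly] <;> positivity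

theorem abelPoly_le_add_mul_pow {a ρ : ℝ} (ha : 0 ≤ a) (hρ : 0 ≤ ρ) (n : ℕ) :
    abelPoly a ρ n ≤ (a + n * ρ) ^ n := by
  cases n with
  | zero => simp [abelPoly]
  | succ n =>
    rw [abelPoly, pow_succ', Nat.cast_succ]
    gcongr
    exact le_add_of_nonneg_right (by positivity)

theorem summable_abelPoly_mul_pow_div_factorial {a ρ r : ℝ} (ha : 0 ≤ a) (hρ : 0 < ρ)
    (hr : 0 ≤ r) (h : ρ * r * Real.exp 1 < 1) :
    Summable fun n : ℕ ↦ abelPoly a ρ n * r ^ n / n ! := by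
  refine Summable.of_nonneg_of_le (fun n ↦ ?_) (fun n ↦ ?_)
    ((summable_geometric_of_lt_one (by positivity) h).mul_left (Real.exp (a / ρ)))
  · have := abelPoly_nonneg ha hρ.le n
    positivity
  · calc abelPoly a ρ n * r ^ n / n ! ≤ (a + n * ρ) ^ n * r ^ n / n ! := by
          gcongr; exact abelPoly_le_add_mul_pow ha hρ.le n
      _ = (ρ * r) ^ n * ((n + a / ρ) ^ n / n !) := by
          rw [mul_pow, show a + n * ρ = ρ * (n + a / ρ) by field_simp; ring, mul_pow]
          ring
      _ ≤ (ρ * r) ^ n * Real.exp (n + a / ρ) := by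
          gcongr; exact Real.pow_div_factorial_le_exp _ (by positivity) n
      _ = Real.exp (a / ρ) * (ρ * r * Real.exp 1) ^ n := by
          rw [Real.exp_add, mul_pow _ (Real.exp 1), ← Real.exp_nat_mul, mul_one]
          ring

theorem norm_abelPoly_le {R : Type*} [NormedCommRing R] [NormOneClass R] {x z : R} {ρ : ℝ}
    (hz : ‖z‖ ≤ ρ) (n : ℕ) : ‖abelPoly x z n‖ ≤ abelPoly ‖x‖ ρ n := by
  cases n with
  | zero => simp [abelPoly]
  | succ n =>
    simp only [abelPoly]
    refine (norm_mul_le _ _).trans ?_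
    gcongr
    refine (norm_pow_le _ n).trans ?_
    gcongr
    calc ‖x + (n + 1) * z‖ ≤ ‖x‖ + ‖((n + 1 : ℕ) : R)‖ * ‖z‖ := by
          push_cast; exact (norm_add_le _ _).trans (by gcongr; exact norm_mul_le _ _)
      _ ≤ ‖x‖ + (n + 1) * ρ := by
          gcongr
          simpa using Nat.norm_cast_le (α := R) (n + 1)

theorem mul_exp_one_sub_le_one (t : ℝ) : t * Real.exp (1 - t) ≤ 1 := by
  have h := Real.add_one_le_exp (t - 1)
  rw [sub_add_cancel] at h
  calc t * Real.exp (1 - t) ≤ Real.exp (t - 1) * Real.exp (1 - t) := by gcongr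
    _ = 1 := by rw [← Real.exp_add]; simp

theorem differentiable_abelPoly {𝕜 : Type*} [NontriviallyNormedField 𝕜] (x : 𝕜) (n : ℕ) :
    Differentiable 𝕜 fun z ↦ abelPoly x z n := by
  cases n <;> simp only [abelPoly] <;> fun_prop

noncomputable def abelTerm (θ z : ℂ) (n : ℕ) : ℂ := abelPoly θ z n * Complex.exp (-(n * z)) / n !

theorem norm_abelTerm_le {θ z : ℂ} {ρ r : ℝ} (hz : ‖z‖ ≤ ρ) (hre : Real.exp (-z.re) ≤ r) (n : ℕ) :
    ‖abelTerm θ z n‖ ≤ abelPoly ‖θ‖ ρ n * r ^ n / n ! := by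
  have hρ : 0 ≤ ρ := (norm_nonneg z).trans hz
  rw [abelTerm, norm_div, norm_mul, Complex.norm_exp, Complex.norm_natCast]
  gcongr
  · exact abelPoly_nonneg (norm_nonneg θ) hρ n
  · exact norm_abelPoly_le hz n
  · calc Real.exp (-(n * z)).re = Real.exp (-z.re) ^ n := by simp [← Real.exp_nat_mul]
      _ ≤ r ^ n := by gcongr

-- `‖z e^{-z}‖ < e⁻¹` makes the series converge, `re z < 1` makes the set star-shaped about `0`.
def abelDomain : Set ℂ := {z | z.re < 1 ∧ ‖z‖ * Real.exp (1 - z.re) < 1}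

theorem isOpen_abelDomain : IsOpen abelDomain :=
  (isOpen_lt Complex.continuous_re continuous_const).inter
    (isOpen_lt (f := fun z : ℂ ↦ ‖z‖ * Real.exp (1 - z.re)) (by fun_prop) continuous_const)

theorem starConvex_abelDomain : StarConvex ℝ 0 abelDomain := by
  rintro z ⟨hre, hnorm⟩ s t hs ht hst
  obtain rfl : s = 1 - t := by linarith
  have ht1 : t ≤ 1 := by linarith
  simp only [smul_zero, zero_add, Complex.real_smul, abelDomain, Set.mem_ofPred_eq,
    Complex.re_ofReal_mul, norm_mul, Complex.norm_real, Real.norm_of_nonneg ht]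
  refine ⟨by rcases le_or_gt 0 z.re with h | h <;> nlinarith, ?_⟩
  have hscale : t * Real.exp ((1 - t) * z.re) ≤ 1 :=
    calc t * Real.exp ((1 - t) * z.re) ≤ t * Real.exp (1 - t) := by
          gcongr; nlinarith
      _ ≤ 1 := mul_exp_one_sub_le_one t
  calc t * ‖z‖ * Real.exp (1 - t * z.re)
      = t * Real.exp ((1 - t) * z.re) * (‖z‖ * Real.exp (1 - z.re)) := by
        rw [mul_mul_mul_comm, ← Real.exp_add]; ring_nf
    _ < 1 := (mul_le_of_le_one_left (by positivity) hscale).trans_lt hnorm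

theorem isPreconnected_abelDomain : IsPreconnected abelDomain :=
  (starConvex_abelDomain.isPathConnected (by simp [abelDomain])).isConnected.isPreconnected

theorem ofReal_mem_abelDomain {t : ℝ} (h0 : 0 < t) (h1 : t < 1) : (t : ℂ) ∈ abelDomain := by
  refine ⟨by simpa using h1, ?_⟩
  have h := Real.add_one_lt_exp (sub_ne_zero.mpr h1.ne)
  rw [sub_add_cancel] at h
  simp only [Complex.norm_real, Real.norm_of_nonneg h0.le, Complex.ofReal_re]
  calc t * Real.exp (1 - t) < Real.exp (t - 1) * Real.exp (1 - t) := by gcongr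
    _ = 1 := by rw [← Real.exp_add]; simp

theorem exists_ball_summable_norm_abelTerm_le (θ : ℂ) {z₀ : ℂ} (hz₀ : z₀ ∈ abelDomain) :
    ∃ ε > 0, ∃ u : ℕ → ℝ, Summable u ∧ ∀ n, ∀ w ∈ Metric.ball z₀ ε, ‖abelTerm θ w n‖ ≤ u n := by
  have hcont : ContinuousAt (fun ε ↦ (‖z₀‖ + ε) * Real.exp (ε - z₀.re) * Real.exp 1) 0 := by
    fun_prop
  have h0 : (‖z₀‖ + 0) * Real.exp (0 - z₀.re) * Real.exp 1 < 1 := by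
    rw [add_zero, mul_assoc, ← Real.exp_add]
    convert hz₀.2 using 3
    ring
  obtain ⟨ε, hε, hε0⟩ := ((hcont.eventually (gt_mem_nhds h0)).filter_mono nhdsWithin_le_nhds
    |>.and (self_mem_nhdsWithin (s := Set.Ioi 0))).exists
  refine ⟨ε, hε0, _, summable_abelPoly_mul_pow_div_factorial (norm_nonneg θ) (by positivity)
    (Real.exp_pos _).le hε, fun n w hw ↦ norm_abelTerm_le ?_ ?_ n⟩
  · have := norm_le_norm_add_norm_sub' w z₀
    rw [Metric.mem_ball, dist_eq_norm] at hw
    linarith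
  · rw [Metric.mem_ball, Complex.dist_eq] at hw
    have := (Complex.abs_re_le_norm (w - z₀)).trans hw.le
    rw [Complex.sub_re, abs_le] at this
    gcongr
    linarith

theorem differentiableOn_tsum_abelTerm (θ : ℂ) :
    DifferentiableOn ℂ (fun z ↦ ∑' n, abelTerm θ z n) abelDomain := by
  intro z₀ hz₀
  obtain ⟨ε, hε, u, hu, hle⟩ := exists_ball_summable_norm_abelTerm_le θ hz₀
  have hdiff := Complex.differentiableOn_tsum_of_summable_norm hu
    (fun n ↦ ((differentiable_abelPoly θ n).mul (by fun_prop)).div_const _ |>.differentiableOn)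
    Metric.isOpen_ball hle
  exact (hdiff.differentiableAt (Metric.ball_mem_nhds z₀ hε)).differentiableWithinAt

theorem HasSum.of_sum_antidiagonal {E : Type*} [AddCommMonoid E] [TopologicalSpace E]
    [ContinuousAdd E] [T3Space E] {f : ℕ × ℕ → E} (hf : Summable f) {g : ℕ → E}
    (hg : ∀ n, HasSum (fun j ↦ f (n, j)) (g n)) {s : E}
    (hs : HasSum (fun N ↦ ∑ p ∈ antidiagonal N, f p) s) : HasSum g s := by
  have hdiag : HasSum (fun N ↦ ∑ p ∈ antidiagonal N, f p) (∑' p, f p) :=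
    (HasAntidiagonal.sigmaAntidiagonalEquivProd.hasSum_iff.mpr hf.hasSum).sigma fun N ↦ by
      rw [← sum_coe_sort]
      exact hasSum_fintype _
  exact hs.unique hdiag ▸ hf.hasSum.prod_fiberwise hg

theorem hasSum_abelTerm_of_norm_lt (θ : ℂ) {z : ℂ} (hz : ‖z‖ < 1 / 8) :
    HasSum (abelTerm θ z) (Complex.exp θ) := by
  set a : ℕ × ℕ → ℂ := fun p ↦ abelPoly θ z p.1 / p.1 ! * ((-(p.1 * z)) ^ p.2 / p.2 !)
  have hrow : ∀ n, HasSum (fun j ↦ a (n, j)) (abelTerm θ z n) := fun n ↦ by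
    simpa only [a, abelTerm, Complex.exp_eq_exp_ℂ, div_mul_eq_mul_div] using
      (NormedSpace.expSeries_div_hasSum_exp (-(n * z))).mul_left (abelPoly θ z n / n !)
  have hdiag : ∀ N, ∑ p ∈ antidiagonal N, a p = θ ^ N / N ! := fun N ↦ by
    have habel := abelSum_eq_add_pow θ z N 0
    rw [abelSum, add_zero] at habel
    rw [Nat.sum_antidiagonal_eq_sum_range_succ_mk, ← habel, sum_div]
    refine sum_congr rfl fun k hk ↦ ?_
    rw [Nat.cast_choose ℂ (Nat.lt_succ_iff.mp (mem_range.mp hk)), zero_sub]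
    have : (N ! : ℂ) ≠ 0 := Nat.cast_ne_zero.mpr N.factorial_ne_zero
    simp only [a]
    field_simp
  have hnorm_row : ∀ n, HasSum (fun j ↦ ‖a (n, j)‖)
      (‖abelPoly θ z n‖ / n ! * Real.exp (n * ‖z‖)) := fun n ↦ by
    simpa [a, Real.exp_eq_exp_ℝ, norm_mul, norm_div, norm_pow] using
      (NormedSpace.expSeries_div_hasSum_exp (n * ‖z‖)).mul_left (‖abelPoly θ z n‖ / n !)
  have hsmall : 1 / 8 * Real.exp (1 / 8) * Real.exp 1 < 1 := by
    have := Real.exp_one_lt_d9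
    have := Real.exp_le_exp.mpr (by norm_num : (1 / 8 : ℝ) ≤ 1)
    nlinarith [Real.exp_pos (1 / 8)]
  have hsum : Summable a := by
    refine Summable.of_norm ((summable_prod_of_nonneg fun _ ↦ norm_nonneg _).mpr
      ⟨fun n ↦ (hnorm_row n).summable, ?_⟩)
    refine Summable.of_nonneg_of_le (fun n ↦ tsum_nonneg fun _ ↦ norm_nonneg _) (fun n ↦ ?_)
      (summable_abelPoly_mul_pow_div_factorial (norm_nonneg θ) (by norm_num)
        (Real.exp_pos _).le hsmall)
    rw [(hnorm_row n).tsum_eq, Real.exp_nat_mul, div_mul_eq_mul_div]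
    have := abelPoly_nonneg (norm_nonneg θ) (by norm_num : (0 : ℝ) ≤ 1 / 8) n
    gcongr
    exact norm_abelPoly_le hz.le n
  exact HasSum.of_sum_antidiagonal hsum hrow (by
    simpa only [hdiag, Complex.exp_eq_exp_ℂ] using NormedSpace.expSeries_div_hasSum_exp θ)

theorem tsum_abelTerm_eq_exp (θ : ℂ) {z : ℂ} (hz : z ∈ abelDomain) :
    ∑' n, abelTerm θ z n = Complex.exp θ := by
  have hanalytic := (differentiableOn_tsum_abelTerm θ).analyticOnNhd isOpen_abelDomain
  refine hanalytic.eqOn_of_preconnected_of_eventuallyEq analyticOnNhd_const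
    isPreconnected_abelDomain (z₀ := 0) (by simp [abelDomain]) ?_ hz
  filter_upwards [Metric.ball_mem_nhds (0 : ℂ) (by norm_num : (0 : ℝ) < 1 / 8)] with w hw
  exact (hasSum_abelTerm_of_norm_lt θ (by simpa using hw)).tsum_eq

theorem stmt6 (θ lam : ℝ) (hθ : 0 < θ) (hlam : lam ∈ Set.Ioo (0 : ℝ) 1) :
    ∑' n : ℕ, θ * (θ + lam * n) ^ ((n : ℤ) - 1) / n.factorial * Real.exp (-(θ + lam * n))
    = 1 := by
  have hterm : ∀ n : ℕ,
      θ * (θ + lam * n) ^ ((n : ℤ) - 1) / n.factorial * Real.exp (-(θ + lam * n)) =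
        Real.exp (-θ) * (abelPoly θ lam n * Real.exp (-(n * lam)) / n !) := fun n ↦ by
    rw [← abelPoly_eq_mul_zpow hθ.ne', neg_add, Real.exp_add, mul_comm lam]
    ring
  have hsum : ∑' n : ℕ, abelPoly θ lam n * Real.exp (-(n * lam)) / n ! = Real.exp θ := by
    have hcast (n : ℕ) : ((abelPoly θ lam n : ℝ) : ℂ) = abelPoly (θ : ℂ) lam n :=
      map_abelPoly Complex.ofRealHom θ lam n
    apply Complex.ofReal_injective
    push_cast [Complex.ofReal_tsum, hcast]
    exact tsum_abelTerm_eq_exp θ (ofReal_mem_abelDomain hlam.1 hlam.2)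
  rw [tsum_congr hterm, tsum_mul_left, hsum, ← Real.exp_add, neg_add_cancel, Real.exp_zero]
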